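/- Let M be an oriented closed connected manifold with fundamental group Γ, I a nonempty countable set, and (X_i, μ_i)_{i∈I} a family of standard Γ-spaces. Then the product Z = ∏_i X_i with the product measure and diagonal Γ-action is a standard Γ-space and ⎸M⎹^Z ≤ inf_{i∈I} ⎸M⎹^{X_i}. -/

import Mathlib

open scoped BigOperators
open Finsupp

noncomputable section

/-- The topological simplex of `x` (the definition of the older Mathlib, which has since
been replaced by `stdSimplex ℝ`). -/
abbrev SimplexCategory.toTopObj (x : SimplexCategory) : Set (Fin (x.len + 1) → NNReal) :=
  { f | ∑ i, f i = 1 }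

/-- The map of topological simplices induced by a morphism of `SimplexCategory`
(the definition of the older Mathlib). -/
def SimplexCategory.toTopMap {x y : SimplexCategory} (f : x ⟶ y) (g : x.toTopObj) :
    y.toTopObj :=
  ⟨fun i => ∑ j ∈ Finset.univ.filter (fun j => f.toOrderHom j = i), g.1 j, by
    simp only [SimplexCategory.toTopObj, Set.mem_ofPred_eq]
    rw [← Finset.sum_biUnion]
    · have hg : ∑ i, g.1 i = 1 := g.2
      convert hg
      simp [Finset.eq_univ_iff_forall]
    · convert Set.pairwiseDisjoint_filter _ _ _⟩

theorem SimplexCategory.continuous_toTopMap {x y : SimplexCategory} (f : x ⟶ y) :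
    Continuous (SimplexCategory.toTopMap f) := by
  refine Continuous.subtype_mk (continuous_pi fun i => ?_) _
  exact continuous_finsetSum _ (fun j _ => (continuous_apply _).comp continuous_subtype_val)

/-- The topological standard `n`-simplex. -/
abbrev TSimplex (n : ℕ) : Type :=
  (SimplexCategory.toTopObj (SimplexCategory.mk n))

/-- Singular `n`-simplices of a space `X`. -/
abbrev SSimplex (n : ℕ) (X : Type) [TopologicalSpace X] : Type := C(TSimplex n, X)

/-- Singular `n`-chains of `X` with coefficients in an abelian group `A`,
with its `ℓ¹`-flavoured finitely supported model. -/
abbrev SChains (n : ℕ) (X : Type) [TopologicalSpace X] (A : Type) [AddCommGroup A] : Type :=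
  SSimplex n X →₀ A

/-- The `i`-th face inclusion of topological simplices. -/
def face (n : ℕ) (i : Fin (n + 2)) : C(TSimplex n, TSimplex (n + 1)) :=
  ⟨fun t => SimplexCategory.toTopMap (SimplexCategory.δ i) t,
    SimplexCategory.continuous_toTopMap _⟩

/-- The singular boundary operator from degree `n+1` to degree `n`. -/
def bdryMap (n : ℕ) (X : Type) [TopologicalSpace X] (A : Type) [AddCommGroup A] :
    SChains (n + 1) X A →ₗ[ℤ] SChains n X A :=
  Finsupp.lsum ℤ fun σ =>
    ∑ i : Fin (n + 2), ((-1 : ℤ) ^ (i : ℕ)) •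
      (Finsupp.lsingle (σ.comp (face n i)) : A →ₗ[ℤ] SChains n X A)

/-- The boundary operator out of degree `n` (the zero map in degree `0`). -/
def bdryFrom (n : ℕ) (X : Type) [TopologicalSpace X] (A : Type) [AddCommGroup A] :
    SChains n X A →ₗ[ℤ] SChains (n - 1) X A :=
  match n with
  | 0 => 0
  | (m + 1) => bdryMap m X A

/-- Singular `n`-cycles. -/
def cyclesSub (n : ℕ) (X : Type) [TopologicalSpace X] (A : Type) [AddCommGroup A] :
    Submodule ℤ (SChains n X A) :=
  LinearMap.ker (bdryFrom n X A)

/-- Singular `n`-boundaries. -/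
def bdriesSub (n : ℕ) (X : Type) [TopologicalSpace X] (A : Type) [AddCommGroup A] :
    Submodule ℤ (SChains n X A) :=
  LinearMap.range (bdryMap n X A)

/-- The `ℓ¹`-norm of an integral singular chain. -/
def l1Z {n : ℕ} {X : Type} [TopologicalSpace X] (c : SChains n X ℤ) : ℝ :=
  c.sum fun _ a => |(a : ℝ)|

/-- The `ℓ¹`-norm of a real singular chain. -/
def l1R {n : ℕ} {X : Type} [TopologicalSpace X] (c : SChains n X ℝ) : ℝ :=
  c.sum fun _ a => |a|

/-- Change of coefficients `ℤ → ℝ` on singular chains. -/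
def castChain {n : ℕ} {X : Type} [TopologicalSpace X] (c : SChains n X ℤ) : SChains n X ℝ :=
  Finsupp.mapRange (fun a : ℤ => (a : ℝ)) Int.cast_zero c

/-- `z` is an integral fundamental cycle of `X` in degree `n`:  it is a cycle whose homology
class freely generates `H_n(X;ℤ)` (which for an oriented closed connected `n`-manifold
characterises the fundamental class up to sign). -/
def IsFundCycle (n : ℕ) (X : Type) [TopologicalSpace X] (z : SChains n X ℤ) : Prop :=
  z ∈ cyclesSub n X ℤ ∧
  (∀ w ∈ cyclesSub n X ℤ, ∃ k : ℤ, w - k • z ∈ bdriesSub n X ℤ) ∧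
  (∀ k : ℤ, k • z ∈ bdriesSub n X ℤ → k = 0)

/-- The `ℓ¹`-semi-norm (over `ℤ`) of the homology class of the cycle `z`. -/
def clNormZ (n : ℕ) (X : Type) [TopologicalSpace X] (z : SChains n X ℤ) : ℝ :=
  sInf {r : ℝ | ∃ c, c ∈ cyclesSub n X ℤ ∧ c - z ∈ bdriesSub n X ℤ ∧ r = l1Z c}

/-- The `ℓ¹`-semi-norm of the image in real homology of the class of the integral cycle `z`;
for a fundamental cycle `z` of `M` this is the simplicial volume `‖M‖`. -/
def realSV (n : ℕ) (X : Type) [TopologicalSpace X] (z : SChains n X ℤ) : ℝ :=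
  sInf {r : ℝ | ∃ c, c ∈ cyclesSub n X ℝ ∧ castChain z - c ∈ bdriesSub n X ℝ ∧ r = l1R c}

/-- The integral simplicial volume `‖X‖_ℤ`. -/
def intSV (n : ℕ) (X : Type) [TopologicalSpace X] : ℝ :=
  sInf {r : ℝ | ∃ z, IsFundCycle n X z ∧ r = clNormZ n X z}

/-- `N` is an oriented closed connected topological `n`-manifold (orientability is recorded
through the existence of fundamental cycles in the statements below). -/
def IsClosedConnectedManifold (n : ℕ) (N : Type) [TopologicalSpace N] : Prop :=
  CompactSpace N ∧ ConnectedSpace N ∧ T2Space N ∧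
    Nonempty (ChartedSpace (EuclideanSpace ℝ (Fin n)) N)

/-- The data contributing value `r` to the stable integral simplicial volume of `M`:
a `d`-sheeted covering `p : N → M` by an oriented closed connected `n`-manifold `N`
together with a fundamental cycle of `N`, with `r = ‖N‖_ℤ / d`. -/
def IsCoverDatum (n : ℕ) (M : Type) [TopologicalSpace M] (N : Type) [TopologicalSpace N]
    (p : N → M) (d : ℕ) (r : ℝ) : Prop :=
  IsClosedConnectedManifold n N ∧ 0 < d ∧ IsCoveringMap p ∧
    (∀ x : M, Nat.card (p ⁻¹' {x}) = d) ∧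
    ∃ z, IsFundCycle n N z ∧ r = clNormZ n N z / d

/-- The stable integral simplicial volume `‖M‖_ℤ^∞`. -/
def stisv (n : ℕ) (M : Type) [TopologicalSpace M] : ℝ :=
  sInf {r : ℝ | ∃ (N : Type) (tN : TopologicalSpace N) (p : N → M) (d : ℕ),
    @IsCoverDatum n M _ N tN p d r}

end

open MeasureTheory

noncomputable section

/-- A standard `Γ`-space structure on `X`: a probability measure on the standard Borel
space `X` together with a measurable measure-preserving (left) `Γ`-action. -/
structure StdStr (Γ : Type) [Group Γ] (X : Type) [MeasurableSpace X] where
  μ : Measure X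
  borel : StandardBorelSpace X
  prob : IsProbabilityMeasure μ
  act : Γ → X → X
  meas : ∀ g, MeasurePreserving (act g) μ μ
  act_one : ∀ x, act 1 x = x
  act_mul : ∀ g h x, act (g * h) x = act g (act h x)

variable {Γ : Type} [Group Γ] {X : Type} [MeasurableSpace X]

/-- The coefficient module `L^∞(X,μ;ℤ)` (for `b = true`) respectively `L^∞(X,μ;ℝ)`
(for `b = false`), realised as essentially bounded (and, if `b = true`, a.e.
integer-valued) elements of the space of a.e.-equivalence classes of measurable
real-valued functions. -/
def LinfG (S : StdStr Γ X) (b : Bool) : AddSubgroup (X →ₘ[S.μ] ℝ) where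
  carrier := {f | (∃ C : ℝ, ∀ᵐ x ∂S.μ, |f x| ≤ C) ∧
    (b → ∀ᵐ x ∂S.μ, ∃ k : ℤ, f x = (k : ℝ))}
  add_mem' := by
    rintro f g ⟨⟨C, hC⟩, hf⟩ ⟨⟨D, hD⟩, hg⟩
    constructor
    · refine ⟨C + D, ?_⟩
      filter_upwards [hC, hD, AEEqFun.coeFn_add f g] with x h1 h2 h3
      rw [h3]
      exact (abs_add_le _ _).trans (add_le_add h1 h2)
    · intro hb
      filter_upwards [hf hb, hg hb, AEEqFun.coeFn_add f g] with x ⟨k, hk⟩ ⟨l, hl⟩ h3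
      exact ⟨k + l, by rw [h3]; simp [Pi.add_apply, hk, hl]⟩
  zero_mem' := by
    constructor
    · refine ⟨0, ?_⟩
      filter_upwards [AEEqFun.coeFn_zero (μ := S.μ) (β := ℝ)] with x h
      simp [h]
    · intro _
      filter_upwards [AEEqFun.coeFn_zero (μ := S.μ) (β := ℝ)] with x h
      exact ⟨0, by simp [h]⟩
  neg_mem' := by
    rintro f ⟨⟨C, hC⟩, hf⟩
    constructor
    · refine ⟨C, ?_⟩
      filter_upwards [hC, AEEqFun.coeFn_neg f] with x h1 h2
      rw [h2]; simpa using h1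
    · intro hb
      filter_upwards [hf hb, AEEqFun.coeFn_neg f] with x ⟨k, hk⟩ h2
      exact ⟨-k, by rw [h2]; simp [hk]⟩

/-- The right `Γ`-action on `L^∞`: `(f · g)(x) = f(g • x)`. -/
def rhoG (S : StdStr Γ X) (b : Bool) (g : Γ) (f : (LinfG S b)) : (LinfG S b) :=
  ⟨AEEqFun.compMeasurePreserving (f : X →ₘ[S.μ] ℝ) (S.act g) (S.meas g), by
    obtain ⟨⟨C, hC⟩, hf⟩ := f.2
    constructor
    · refine ⟨C, ?_⟩
      have := (S.meas g).quasiMeasurePreserving.ae hC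
      filter_upwards [AEEqFun.coeFn_compMeasurePreserving
        (f : X →ₘ[S.μ] ℝ) (S.meas g), this] with x h1 h2
      rw [h1]; exact h2
    · intro hb
      have := (S.meas g).quasiMeasurePreserving.ae (hf hb)
      filter_upwards [AEEqFun.coeFn_compMeasurePreserving
        (f : X →ₘ[S.μ] ℝ) (S.meas g), this] with x h1 h2
      rw [h1]; exact h2⟩

/-- The constant function with (integer) value `k` in the coefficient module. -/
def constLG (S : StdStr Γ X) (b : Bool) (k : ℤ) : (LinfG S b) :=
  ⟨k • (AEEqFun.const X (1 : ℝ) : X →ₘ[S.μ] ℝ), by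
    constructor
    · refine ⟨|(k : ℝ)|, ?_⟩
      have h1 : ((k • (AEEqFun.const X (1 : ℝ) : X →ₘ[S.μ] ℝ)) : X →ₘ[S.μ] ℝ)
          =ᵐ[S.μ] fun _ => (k : ℝ) := by
        filter_upwards [AEEqFun.coeFn_smul (k : ℤ) (AEEqFun.const X (1 : ℝ) : X →ₘ[S.μ] ℝ),
          AEEqFun.coeFn_const X (1 : ℝ)] with x h2 h3
        simp [h2, h3]
      filter_upwards [h1] with x h
      rw [h]
    · intro _
      have h1 : ((k • (AEEqFun.const X (1 : ℝ) : X →ₘ[S.μ] ℝ)) : X →ₘ[S.μ] ℝ)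
          =ᵐ[S.μ] fun _ => (k : ℝ) := by
        filter_upwards [AEEqFun.coeFn_smul (k : ℤ) (AEEqFun.const X (1 : ℝ) : X →ₘ[S.μ] ℝ),
          AEEqFun.coeFn_const X (1 : ℝ)] with x h2 h3
        simp [h2, h3]
      filter_upwards [h1] with x h
      exact ⟨k, h⟩⟩

theorem constLG_zero (S : StdStr Γ X) (b : Bool) : constLG S b 0 = 0 :=
  Subtype.ext (zero_smul ℤ _)

variable {Mt : Type} [TopologicalSpace Mt]

/-- Change of coefficients from `ℤ` to `L^∞` (constant functions) on chains of the
universal covering; this realises `C_*(M̃;ℤ) → L^∞ ⊗ C_*(M̃;ℤ)` at the chain level. -/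
def iotaChain (S : StdStr Γ X) (b : Bool) {n : ℕ} (c : SChains n Mt ℤ) :
    SChains n Mt (LinfG S b) :=
  Finsupp.mapRange (constLG S b) (constLG_zero S b) c

/-- The submodule of relations defining the twisted coefficients
`L^∞(X;ℤ) ⊗_{ℤΓ} C_n(M̃;ℤ)`:  it is spanned by the elements
`(g·σ) ⊗ f - σ ⊗ (f·g)`. -/
def relSub (n : ℕ) (actM : Γ → C(Mt, Mt)) (S : StdStr Γ X) (b : Bool) :
    Submodule ℤ (SChains n Mt (LinfG S b)) :=
  Submodule.span ℤ {c | ∃ (g : Γ) (σ : SSimplex n Mt) (f : (LinfG S b)),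
    c = Finsupp.single ((actM g).comp σ) f - Finsupp.single σ (rhoG S b g f)}

/-- The parametrised `ℓ¹`-norm `Σ_σ ∫_X |f_σ| dμ` of a twisted chain. -/
def normP (S : StdStr Γ X) (b : Bool) {n : ℕ} (c : SChains n Mt (LinfG S b)) : ℝ :=
  c.sum fun _ f => ∫ x, |(f : X →ₘ[S.μ] ℝ) x| ∂S.μ

/-- Pushforward of chains along the covering projection. -/
def pushf {M : Type} [TopologicalSpace M] (π : C(Mt, M)) {n : ℕ}
    (c : SChains n Mt ℤ) : SChains n M ℤ :=
  Finsupp.mapDomain (fun σ => π.comp σ) c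

/-- `c` is an `X`-parametrised fundamental cycle for the fundamental cycle `z` of `M`:
working in the model `L^∞ ⊗_{ℤΓ} C_*(M̃;ℤ) = C_*(M̃;L^∞)/rel`, the chain `c` is a cycle
of the quotient complex and represents the image of the class of `z` under the change of
coefficients given by the constant inclusion `ℤ ↪ L^∞`. -/
def IsPFC (n : ℕ) (Γ : Type) [Group Γ] (Mt M : Type) [TopologicalSpace Mt]
    [TopologicalSpace M] (π : C(Mt, M)) (actM : Γ → C(Mt, Mt))
    (X : Type) [MeasurableSpace X] (S : StdStr Γ X) (b : Bool)
    (z : SChains n M ℤ) (c : SChains n Mt (LinfG S b)) : Prop :=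
  bdryFrom n Mt (LinfG S b) c ∈ relSub (n - 1) actM S b ∧
  ∃ zt : SChains n Mt ℤ, pushf π zt = z ∧
    c - iotaChain S b zt ∈ relSub n actM S b ⊔ bdriesSub n Mt (LinfG S b)

/-- The `X`-parametrised simplicial volume `⎸M⎹^X` (with integral coefficients for
`b = true`, with real coefficients for `b = false`). -/
def pSV (b : Bool) (n : ℕ) (Γ : Type) [Group Γ] (Mt M : Type) [TopologicalSpace Mt]
    [TopologicalSpace M] (π : C(Mt, M)) (actM : Γ → C(Mt, Mt))
    (X : Type) [MeasurableSpace X] (S : StdStr Γ X) (z : SChains n M ℤ) : ℝ :=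
  sInf {r : ℝ | ∃ c, IsPFC n Γ Mt M π actM X S b z c ∧ r = normP S b c}

/-- The integral foliated simplicial volume `⎸M⎹`: the infimum of the `X`-parametrised
simplicial volumes over all standard `Γ`-spaces `X`. -/
def ifsv (n : ℕ) (Γ : Type) [Group Γ] (Mt M : Type) [TopologicalSpace Mt]
    [TopologicalSpace M] (π : C(Mt, M)) (actM : Γ → C(Mt, Mt))
    (z : SChains n M ℤ) : ℝ :=
  sInf {r : ℝ | ∃ (X : Type) (mX : MeasurableSpace X) (S : @StdStr Γ _ X mX),
    r = @pSV true n Γ _ Mt M _ _ π actM X mX S z}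

/-- `π : M̃ → M` is a universal covering with deck transformation action `actM` of `Γ`
(so that `Γ` is identified with the fundamental group of `M`). -/
structure UnivCover (Γ : Type) [Group Γ] (Mt M : Type) [TopologicalSpace Mt]
    [TopologicalSpace M] (π : C(Mt, M)) (actM : Γ → C(Mt, Mt)) : Prop where
  covering : IsCoveringMap π
  simplyConnected : SimplyConnectedSpace Mt
  deck_proj : ∀ g x, π (actM g x) = π x
  deck_trans : ∀ x y, π x = π y → ∃ g, actM g x = y
  deck_free : ∀ g x, actM g x = x → g = 1
  act_one : ∀ x, actM 1 x = x
  act_mul : ∀ g h x, actM (g * h) x = actM g (actM h x)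

end

/-!
A measure preserving `Γ`-equivariant map `e : X → Y` induces, by pulling back coefficients
`f ↦ f ∘ e`, a chain map `L^∞(Y;ℤ) ⊗_{ℤΓ} C_*(M̃;ℤ) → L^∞(X;ℤ) ⊗_{ℤΓ} C_*(M̃;ℤ)` which preserves
the parametrised `ℓ¹`-norm and fixes constant functions. It therefore carries `Y`-parametrised
fundamental cycles to `X`-parametrised ones of the same norm, so `⎸M⎹^X ≤ ⎸M⎹^Y`. The cylinder
condition identifies `ζ` with the infinite product measure, which is invariant under the diagonal
action and for which every coordinate projection `∏ᵢ Xᵢ → Xᵢ` is such a map.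
-/

theorem Finsupp.mem_span_single_sub_single_of_mapDomain_eq_zero {α β R : Type*} [Ring R]
    {q : α → β} {w : α →₀ R} (hw : Finsupp.mapDomain q w = 0) :
    w ∈ Submodule.span R
      {c | ∃ a a', q a = q a' ∧ c = Finsupp.single a 1 - Finsupp.single a' 1} := by
  rcases isEmpty_or_nonempty α with hα | hα
  · simp [Subsingleton.elim w 0]
  set D := {c | ∃ a a', q a = q a' ∧ c = Finsupp.single a (1 : R) - Finsupp.single a' 1}
  -- Moving every point to a chosen representative of its fibre only changes `w` modulo `D`.
  have key : ∀ v : α →₀ R,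
      v - Finsupp.mapDomain (Function.invFun q ∘ q) v ∈ Submodule.span R D := by
    intro v
    induction v using Finsupp.induction_linear with
    | zero => simp
    | add u v hu hv =>
      rw [Finsupp.mapDomain_add, add_sub_add_comm]
      exact Submodule.add_mem _ hu hv
    | single a r =>
      have hgen : Finsupp.single a (1 : R) - Finsupp.single (Function.invFun q (q a)) 1 ∈ D :=
        ⟨a, _, (Function.invFun_eq ⟨a, rfl⟩).symm, rfl⟩
      rw [Finsupp.mapDomain_single, Function.comp_apply]
      convert Submodule.smul_mem _ r (Submodule.subset_span hgen) using 1
      rw [smul_sub, Finsupp.smul_single, Finsupp.smul_single, smul_eq_mul, mul_one]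
  simpa [Finsupp.mapDomain_comp, hw] using key w

theorem MeasureTheory.AEEqFun.compMeasurePreserving_add {α β γ : Type*} [MeasurableSpace α]
    [MeasurableSpace β] {μ : Measure α} {ν : Measure β} [TopologicalSpace γ] [Add γ]
    [ContinuousAdd γ] {e : α → β} (he : MeasurePreserving e μ ν) (f g : β →ₘ[ν] γ) :
    (f + g).compMeasurePreserving e he =
      f.compMeasurePreserving e he + g.compMeasurePreserving e he := by
  induction f, g using AEEqFun.induction_on₂ with
  | H f hf g hg => rfl

instance TSimplex.instConnectedSpace (n : ℕ) : ConnectedSpace (TSimplex n) := by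
  refine Function.Surjective.connectedSpace
    (f := fun x : stdSimplex ℝ (Fin (n + 1)) =>
      (⟨fun i => Real.toNNReal (x.1 i), ?_⟩ : TSimplex n)) ?_ ?_
  · show ∑ i, Real.toNNReal (x.1 i) = 1
    rw [← Real.toNNReal_sum_of_nonneg fun i _ => x.2.1 i, x.2.2, Real.toNNReal_one]
  · intro f
    refine ⟨⟨fun i => (f.1 i : ℝ), fun i => (f.1 i).2, ?_⟩, ?_⟩
    · have hf : ∑ i, f.1 i = 1 := f.2
      simp only [← NNReal.coe_sum, hf, NNReal.coe_one]
    · ext i; simp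
  · exact Continuous.subtype_mk (continuous_pi fun i =>
      continuous_real_toNNReal.comp ((continuous_apply i).comp continuous_subtype_val)) _

theorem UnivCover.exists_deck_comp_eq {Γ : Type} [Group Γ] {Mt M : Type} [TopologicalSpace Mt]
    [TopologicalSpace M] {π : C(Mt, M)} {actM : Γ → C(Mt, Mt)} (hU : UnivCover Γ Mt M π actM)
    {W : Type} [TopologicalSpace W] [ConnectedSpace W] {σ σ' : C(W, Mt)}
    (h : π.comp σ = π.comp σ') : ∃ g, (actM g).comp σ' = σ := by
  obtain ⟨w⟩ := ConnectedSpace.toNonempty (α := W)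
  obtain ⟨g, hg⟩ := hU.deck_trans (σ' w) (σ w) (DFunLike.congr_fun h w).symm
  refine ⟨g, ContinuousMap.ext (congrFun ?_)⟩
  refine hU.covering.eq_of_comp_eq ((actM g).comp σ').continuous σ.continuous ?_ w hg
  funext t
  simpa [hU.deck_proj] using (DFunLike.congr_fun h t).symm

section ChainMaps

variable {X : Type} [TopologicalSpace X] {A B : Type} [AddCommGroup A] [AddCommGroup B]

theorem bdryMap_single (n : ℕ) (σ : SSimplex (n + 1) X) (a : A) :
    bdryMap n X A (Finsupp.single σ a) =
      ∑ i : Fin (n + 2), Finsupp.single (σ.comp (face n i)) (((-1 : ℤ) ^ (i : ℕ)) • a) := by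
  simp only [bdryMap, Finsupp.lsum_single, LinearMap.sum_apply, LinearMap.smul_apply,
    Finsupp.lsingle_apply, Finsupp.smul_single]

noncomputable def SChains.mapCoeff (n : ℕ) (h : A →+ B) : SChains n X A →ₗ[ℤ] SChains n X B :=
  Finsupp.mapRange.linearMap h.toIntLinearMap

theorem bdryMap_mapCoeff (n : ℕ) (h : A →+ B) (c : SChains (n + 1) X A) :
    bdryMap n X B (SChains.mapCoeff (n + 1) h c) = SChains.mapCoeff n h (bdryMap n X A c) := by
  rw [← LinearMap.comp_apply, ← LinearMap.comp_apply]
  congr 1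
  refine Finsupp.lhom_ext fun σ a => ?_
  simp [SChains.mapCoeff, bdryMap_single]

theorem bdryFrom_mapCoeff (n : ℕ) (h : A →+ B) (c : SChains n X A) :
    bdryFrom n X B (SChains.mapCoeff n h c) = SChains.mapCoeff (n - 1) h (bdryFrom n X A c) := by
  cases n with
  | zero => simp [bdryFrom]
  | succ m => exact bdryMap_mapCoeff m h c

theorem mapCoeff_mem_bdriesSub (n : ℕ) (h : A →+ B) {c : SChains n X A}
    (hc : c ∈ bdriesSub n X A) : SChains.mapCoeff n h c ∈ bdriesSub n X B := by
  obtain ⟨d, rfl⟩ := hc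
  exact ⟨SChains.mapCoeff (n + 1) h d, bdryMap_mapCoeff n h d⟩

theorem pushf_bdryFrom {Y : Type} [TopologicalSpace Y] (φ : C(X, Y)) (n : ℕ)
    (c : SChains n X ℤ) : pushf φ (bdryFrom n X ℤ c) = bdryFrom n Y ℤ (pushf φ c) := by
  cases n with
  | zero => simp [bdryFrom, pushf]
  | succ m =>
    induction c using Finsupp.induction_linear with
    | zero => simp [pushf]
    | add c d hc hd => simp only [map_add, pushf, Finsupp.mapDomain_add] at hc hd ⊢; rw [hc, hd]
    | single σ a =>
      simp only [bdryFrom, pushf, bdryMap_single, Finsupp.mapDomain_finsetSum,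
        Finsupp.mapDomain_single, ContinuousMap.comp_assoc]

end ChainMaps

section Coefficients

variable {Γ : Type} [Group Γ] {X Y Z : Type} [MeasurableSpace X] [MeasurableSpace Y]
  [MeasurableSpace Z] (S : StdStr Γ X) (T : StdStr Γ Y) (U : StdStr Γ Z) (b : Bool)

theorem compMeasurePreserving_mem_LinfG {e : X → Y} (he : MeasurePreserving e S.μ T.μ)
    {f : Y →ₘ[T.μ] ℝ} (hf : f ∈ LinfG T b) : f.compMeasurePreserving e he ∈ LinfG S b := by
  obtain ⟨⟨C, hC⟩, hint⟩ := hf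
  refine ⟨⟨C, ?_⟩, fun hb => ?_⟩
  · filter_upwards [AEEqFun.coeFn_compMeasurePreserving f he,
      he.quasiMeasurePreserving.ae hC] with x hx hCx
    rwa [hx]
  · filter_upwards [AEEqFun.coeFn_compMeasurePreserving f he,
      he.quasiMeasurePreserving.ae (hint hb)] with x hx hkx
    rwa [hx]

noncomputable def pullLinf {e : X → Y} (he : MeasurePreserving e S.μ T.μ) :
    LinfG T b →+ LinfG S b where
  toFun f := ⟨(f : Y →ₘ[T.μ] ℝ).compMeasurePreserving e he,
    compMeasurePreserving_mem_LinfG S T b he f.2⟩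
  map_zero' := rfl
  map_add' f g := Subtype.ext (AEEqFun.compMeasurePreserving_add he f.1 g.1)

theorem rhoG_eq_pullLinf (g : Γ) : rhoG S b g = pullLinf S S b (S.meas g) := rfl

theorem pullLinf_pullLinf {e : X → Y} (he : MeasurePreserving e S.μ T.μ) {e' : Y → Z}
    (he' : MeasurePreserving e' T.μ U.μ) (f : LinfG U b) :
    pullLinf S T b he (pullLinf T U b he' f) = pullLinf S U b (he'.comp he) f :=
  Subtype.ext (AEEqFun.compMeasurePreserving_comp _ he' he).symm

theorem pullLinf_congr {e e' : X → Y} (he : MeasurePreserving e S.μ T.μ) (h : e = e')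
    (f : LinfG T b) : pullLinf S T b he f = pullLinf S T b (h ▸ he) f := by
  subst h; rfl

theorem pullLinf_rhoG {e : X → Y} (he : MeasurePreserving e S.μ T.μ)
    (heq : ∀ g x, e (S.act g x) = T.act g (e x)) (g : Γ) (f : LinfG T b) :
    pullLinf S T b he (rhoG T b g f) = rhoG S b g (pullLinf S T b he f) := by
  rw [rhoG_eq_pullLinf, rhoG_eq_pullLinf, pullLinf_pullLinf, pullLinf_pullLinf,
    pullLinf_congr S T b _ (funext (heq g)).symm]

theorem pullLinf_constLG {e : X → Y} (he : MeasurePreserving e S.μ T.μ) (k : ℤ) :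
    pullLinf S T b he (constLG T b k) = constLG S b k := rfl

theorem rhoG_constLG (g : Γ) (k : ℤ) : rhoG S b g (constLG S b k) = constLG S b k := rfl

noncomputable def constHom : ℤ →+ LinfG S b :=
  AddMonoidHom.mk' (constLG S b) fun k l => Subtype.ext (add_smul k l _)

theorem constHom_apply (k : ℤ) : constHom S b k = constLG S b k := rfl

theorem integral_abs_pullLinf {e : X → Y} (he : MeasurePreserving e S.μ T.μ) (f : LinfG T b) :
    ∫ x, |(pullLinf S T b he f : X →ₘ[S.μ] ℝ) x| ∂S.μ = ∫ y, |(f : Y →ₘ[T.μ] ℝ) y| ∂T.μ := by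
  have hf : AEStronglyMeasurable (fun y => |(f : Y →ₘ[T.μ] ℝ) y|) (S.μ.map e) := by
    rw [he.map_eq]
    exact (f : Y →ₘ[T.μ] ℝ).aestronglyMeasurable.norm
  calc ∫ x, |(pullLinf S T b he f : X →ₘ[S.μ] ℝ) x| ∂S.μ
      = ∫ x, |(f : Y →ₘ[T.μ] ℝ) (e x)| ∂S.μ := by
        refine integral_congr_ae ?_
        filter_upwards [AEEqFun.coeFn_compMeasurePreserving (f : Y →ₘ[T.μ] ℝ) he] with x hx
        exact congrArg abs hx
    _ = ∫ y, |(f : Y →ₘ[T.μ] ℝ) y| ∂(S.μ.map e) := (integral_map he.measurable.aemeasurable hf).symm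
    _ = ∫ y, |(f : Y →ₘ[T.μ] ℝ) y| ∂T.μ := by rw [he.map_eq]

end Coefficients

section Twisted

variable {Γ : Type} [Group Γ] {Mt M : Type} [TopologicalSpace Mt] [TopologicalSpace M]
  {π : C(Mt, M)} {actM : Γ → C(Mt, Mt)} {X Y : Type} [MeasurableSpace X] [MeasurableSpace Y]
  (S : StdStr Γ X) (T : StdStr Γ Y) (b : Bool)

theorem iotaChain_eq_mapCoeff {n : ℕ} (c : SChains n Mt ℤ) :
    iotaChain S b c = SChains.mapCoeff n (constHom S b) c := rfl

theorem mapCoeff_mem_relSub {n : ℕ} (h : LinfG T b →+ LinfG S b)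
    (hρ : ∀ g f, h (rhoG T b g f) = rhoG S b g (h f)) {c : SChains n Mt (LinfG T b)}
    (hc : c ∈ relSub n actM T b) : SChains.mapCoeff n h c ∈ relSub n actM S b := by
  refine (Submodule.span_le (p := (relSub n actM S b).comap (SChains.mapCoeff n h))).mpr ?_ hc
  rintro _ ⟨g, σ, f, rfl⟩
  refine Submodule.subset_span ⟨g, σ, h f, ?_⟩
  simp only [map_sub, SChains.mapCoeff, Finsupp.mapRange.linearMap_apply,
    AddMonoidHom.coe_toIntLinearMap, Finsupp.mapRange_single, hρ]

theorem iotaChain_mem_relSub (hU : UnivCover Γ Mt M π actM) {n : ℕ} {w : SChains n Mt ℤ}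
    (hw : pushf π w = 0) : iotaChain S b w ∈ relSub n actM S b := by
  refine (Submodule.span_le
    (p := (relSub n actM S b).comap (SChains.mapCoeff n (constHom S b)))).mpr ?_
    (Finsupp.mem_span_single_sub_single_of_mapDomain_eq_zero hw)
  rintro _ ⟨σ, σ', hσ, rfl⟩
  obtain ⟨g, rfl⟩ := hU.exists_deck_comp_eq hσ
  refine Submodule.subset_span ⟨g, σ', constLG S b 1, ?_⟩
  simp only [map_sub, SChains.mapCoeff, Finsupp.mapRange.linearMap_apply,
    AddMonoidHom.coe_toIntLinearMap, Finsupp.mapRange_single, constHom_apply, rhoG_constLG]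

theorem isPFC_iotaChain (hU : UnivCover Γ Mt M π actM) {n : ℕ} {z : SChains n M ℤ}
    (hz : z ∈ cyclesSub n M ℤ) {zt : SChains n Mt ℤ} (hzt : pushf π zt = z) :
    IsPFC n Γ Mt M π actM X S b z (iotaChain S b zt) := by
  refine ⟨?_, zt, hzt, by simp⟩
  rw [iotaChain_eq_mapCoeff, bdryFrom_mapCoeff, ← iotaChain_eq_mapCoeff]
  refine iotaChain_mem_relSub S b hU ?_
  rw [pushf_bdryFrom, hzt]
  exact hz

theorem isPFC_mapCoeff_pullLinf {n : ℕ} {z : SChains n M ℤ} {e : X → Y}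
    (he : MeasurePreserving e S.μ T.μ) (heq : ∀ g x, e (S.act g x) = T.act g (e x))
    {c : SChains n Mt (LinfG T b)} (hc : IsPFC n Γ Mt M π actM Y T b z c) :
    IsPFC n Γ Mt M π actM X S b z (SChains.mapCoeff n (pullLinf S T b he) c) := by
  obtain ⟨hcyc, zt, hzt, hhom⟩ := hc
  have hρ := pullLinf_rhoG S T b he heq
  refine ⟨?_, zt, hzt, ?_⟩
  · rw [bdryFrom_mapCoeff]
    exact mapCoeff_mem_relSub S T b _ hρ hcyc
  · have hiota : iotaChain S b zt = SChains.mapCoeff n (pullLinf S T b he) (iotaChain T b zt) :=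
      Finsupp.ext fun σ => (pullLinf_constLG S T b he (zt σ)).symm
    rw [hiota, ← map_sub]
    obtain ⟨u, hu, v, hv, huv⟩ := Submodule.mem_sup.mp hhom
    rw [← huv, map_add]
    exact Submodule.add_mem_sup (mapCoeff_mem_relSub S T b _ hρ hu) (mapCoeff_mem_bdriesSub n _ hv)

theorem normP_mapCoeff_pullLinf {n : ℕ} {e : X → Y} (he : MeasurePreserving e S.μ T.μ)
    (c : SChains n Mt (LinfG T b)) :
    normP S b (SChains.mapCoeff n (pullLinf S T b he) c) = normP T b c := by
  simp only [normP, SChains.mapCoeff, Finsupp.mapRange.linearMap_apply,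
    AddMonoidHom.coe_toIntLinearMap]
  rw [Finsupp.sum_mapRange_index]
  · exact Finsupp.sum_congr fun σ _ => integral_abs_pullLinf S T b he _
  · intro σ
    rw [integral_congr_ae ((AEEqFun.coeFn_zero (μ := S.μ) (β := ℝ)).mono fun x hx => ?_)]
    · exact integral_zero _ _
    · simp [hx]

theorem normP_nonneg {n : ℕ} (c : SChains n Mt (LinfG S b)) : 0 ≤ normP S b c :=
  Finset.sum_nonneg fun _ _ => integral_nonneg fun _ => abs_nonneg _

end Twisted

theorem pSV_le_of_measurePreserving {Γ : Type} [Group Γ] {Mt M : Type} [TopologicalSpace Mt]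
    [TopologicalSpace M] {π : C(Mt, M)} {actM : Γ → C(Mt, Mt)} (hU : UnivCover Γ Mt M π actM)
    {n : ℕ} {z : SChains n M ℤ} (hz : z ∈ cyclesSub n M ℤ) {X Y : Type} [MeasurableSpace X]
    [MeasurableSpace Y] (S : StdStr Γ X) (T : StdStr Γ Y) {e : X → Y}
    (he : MeasurePreserving e S.μ T.μ) (heq : ∀ g x, e (S.act g x) = T.act g (e x)) (b : Bool) :
    pSV b n Γ Mt M π actM X S z ≤ pSV b n Γ Mt M π actM Y T z := by
  set normsX := {r : ℝ | ∃ c, IsPFC n Γ Mt M π actM X S b z c ∧ r = normP S b c}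
  set normsY := {r : ℝ | ∃ c, IsPFC n Γ Mt M π actM Y T b z c ∧ r = normP T b c}
  have hYX : normsY ⊆ normsX := by
    rintro _ ⟨c, hc, rfl⟩
    exact ⟨_, isPFC_mapCoeff_pullLinf S T b he heq hc, (normP_mapCoeff_pullLinf S T b he c).symm⟩
  rcases normsY.eq_empty_or_nonempty with hY | hY
  · -- `sInf ∅ = 0`, so `normsX` must be empty too: a parametrised fundamental cycle over `X`
    -- provides a lift of `z`, whose image with constant coefficients is one over `Y`.
    have hX : normsX = ∅ := by
      refine Set.eq_empty_of_forall_notMem ?_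
      rintro _ ⟨c, ⟨-, zt, hzt, -⟩, -⟩
      exact hY.subset ⟨_, isPFC_iotaChain T b hU hz hzt, rfl⟩
    change sInf normsX ≤ sInf normsY
    rw [hX, hY]
  · exact csInf_le_csInf ⟨0, by rintro _ ⟨c, -, rfl⟩; exact normP_nonneg S b c⟩ hY hYX

noncomputable def StdStr.pi {Γ : Type} [Group Γ] {I : Type} [Countable I] {Xi : I → Type}
    [∀ i, MeasurableSpace (Xi i)] (Si : ∀ i, StdStr Γ (Xi i)) : StdStr Γ (∀ i, Xi i) :=
  have := fun i => (Si i).prob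
  have := fun i => (Si i).borel
  { μ := Measure.infinitePi fun i => (Si i).μ
    borel := inferInstance
    prob := inferInstance
    act := fun g x i => (Si i).act g (x i)
    meas := fun g => by
      refine ⟨measurable_pi_lambda _ fun i =>
        ((Si i).meas g).measurable.comp (measurable_pi_apply i), ?_⟩
      rw [Measure.infinitePi_map_pi _ fun i => ((Si i).meas g).measurable]
      exact congrArg _ (funext fun i => ((Si i).meas g).map_eq)
    act_one := fun x => funext fun i => (Si i).act_one (x i)
    act_mul := fun g h x => funext fun i => (Si i).act_mul g h (x i) }

open scoped BigOperators in
theorem parametrised_simplicial_volume_product_le_general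
    (n : ℕ) (Γ : Type) [Group Γ]
    (M : Type) [TopologicalSpace M]
    (Mt : Type) [TopologicalSpace Mt] (π : C(Mt, M)) (actM : Γ → C(Mt, Mt))
    (hU : UnivCover Γ Mt M π actM)
    (z : SChains n M ℤ) (hz : IsFundCycle n M z)
    (I : Type) [Countable I] [Nonempty I]
    (Xi : I → Type) [∀ i, MeasurableSpace (Xi i)] (Si : ∀ i, StdStr Γ (Xi i))
    (ζ : MeasureTheory.Measure (∀ i, Xi i))
    (hcyl : ∀ (s : Finset I) (A : ∀ i, Set (Xi i)), (∀ i, MeasurableSet (A i)) →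
      ζ {x | ∀ i ∈ s, x i ∈ A i} = ∏ i ∈ s, (Si i).μ (A i)) :
    ∃ S : StdStr Γ (∀ i, Xi i), S.μ = ζ ∧
      S.act = (fun g x i => (Si i).act g (x i)) ∧
      pSV true n Γ Mt M π actM (∀ i, Xi i) S z ≤ ⨅ i, pSV true n Γ Mt M π actM (Xi i) (Si i) z := by
  have := fun i => (Si i).prob
  obtain rfl : ζ = Measure.infinitePi fun i => (Si i).μ := Measure.eq_infinitePi _ hcyl
  refine ⟨StdStr.pi Si, rfl, rfl, le_ciInf fun i => ?_⟩
  exact pSV_le_of_measurePreserving hU hz.1 (StdStr.pi Si) (Si i)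
    (measurePreserving_eval_infinitePi _ i) (fun _ _ => rfl) true

open scoped BigOperators in
/-- Let `M` be an oriented closed connected manifold with fundamental
group `Γ`, `I` a nonempty countable set and `(X_i,μ_i)` a family of standard `Γ`-spaces.
Then the product `Z = ∏ᵢ Xᵢ` with the product measure `ζ` (characterised on cylinder
sets) and the diagonal `Γ`-action is a standard `Γ`-space and
`⎸M⎹^Z ≤ infᵢ ⎸M⎹^{Xᵢ}`. -/
theorem parametrised_simplicial_volume_product_le
    (n : ℕ) (Γ : Type) [Group Γ] [Countable Γ]
    (M : Type) [TopologicalSpace M] [CompactSpace M] [ConnectedSpace M] [T2Space M]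
    [ChartedSpace (EuclideanSpace ℝ (Fin n)) M]
    (Mt : Type) [TopologicalSpace Mt] (π : C(Mt, M)) (actM : Γ → C(Mt, Mt))
    (hU : UnivCover Γ Mt M π actM)
    (z : SChains n M ℤ) (hz : IsFundCycle n M z)
    (I : Type) [Countable I] [Nonempty I]
    (Xi : I → Type) [∀ i, MeasurableSpace (Xi i)] (Si : ∀ i, StdStr Γ (Xi i))
    (ζ : MeasureTheory.Measure (∀ i, Xi i)) (hζprob : MeasureTheory.IsProbabilityMeasure ζ)
    (hcyl : ∀ (s : Finset I) (A : ∀ i, Set (Xi i)), (∀ i, MeasurableSet (A i)) →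
      ζ {x | ∀ i ∈ s, x i ∈ A i} = ∏ i ∈ s, (Si i).μ (A i)) :
    ∃ S : StdStr Γ (∀ i, Xi i), S.μ = ζ ∧
      S.act = (fun g x i => (Si i).act g (x i)) ∧
      pSV true n Γ Mt M π actM (∀ i, Xi i) S z ≤ ⨅ i, pSV true n Γ Mt M π actM (Xi i) (Si i) z :=
  parametrised_simplicial_volume_product_le_general n Γ M Mt π actM hU z hz I Xi Si ζ hcyl
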